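/- Let X ⊆ ℝⁿ be nonempty closed convex, f : ℝⁿ → ℝ be μ-strongly convex on X with L-Lipschitz continuous gradient, and let x* = argmin_{x∈X} f(x). Given x ∈ X, γ ≥ L, and h ∈ (0,1], define x̂ = Π_X(x − (1/γ)∇f(x)) and x⁺ = x + h(x̂ − x). Then ‖x⁺ − x*‖ ≤ ρ‖x − x*‖ where ρ = (1 − hμ/γ)^{1/2}, and 0 ≤ ρ < 1. -/

import Mathlib

/-!
The variational inequality of the projection, strong convexity between `x` and `x*`, the descent
lemma between `x` and `x̂` (with `γ ≥ L`) and the optimality `f x* ≤ f x̂` add up to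
`γ ‖x̂ - x*‖² ≤ (γ - μ) ‖x - x*‖²`. Since `x⁺ - x* = (1 - h) (x - x*) + h (x̂ - x*)`, convexity of
`‖·‖²` then gives `‖x⁺ - x*‖² ≤ (1 - h μ / γ) ‖x - x*‖²`.
-/

open scoped RealInnerProductSpace

section

variable {E : Type*} [NormedAddCommGroup E] [InnerProductSpace ℝ E]

lemma HasGradientAt.hasDerivAt_comp_add_smul [CompleteSpace E] {f : E → ℝ} {g x d : E} {t : ℝ}
    (hf : HasGradientAt f g (x + t • d)) :
    HasDerivAt (fun s : ℝ => f (x + s • d)) ⟪g, d⟫ t := by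
  have hline : HasDerivAt (fun s : ℝ => x + s • d) d t := by
    simpa using ((hasDerivAt_id t).smul_const d).const_add x
  have hcomp := hf.hasFDerivAt.comp_hasDerivAt t hline
  rwa [InnerProductSpace.toDual_apply_apply] at hcomp

/-- The descent lemma. -/
lemma Convex.le_add_inner_add_sq_of_lipschitz_gradient [CompleteSpace E] {X : Set E}
    (hX : Convex ℝ X) {f : E → ℝ} {g : E → E} (hg : ∀ z ∈ X, HasGradientAt f (g z) z) {L : ℝ}
    {x y : E} (hx : x ∈ X) (hy : y ∈ X) (hlip : ∀ z ∈ X, ‖g z - g x‖ ≤ L * ‖z - x‖) :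
    f y ≤ f x + ⟪g x, y - x⟫ + L / 2 * ‖y - x‖ ^ 2 := by
  set d := y - x
  have hseg : ∀ t ∈ Set.Icc (0 : ℝ) 1, x + t • d ∈ X := fun t ht => by
    simpa [d, AffineMap.lineMap_apply_module', add_comm] using
      hX.lineMap_mem hx hy ht
  set ψ : ℝ → ℝ := fun s => f (x + s • d) - s * ⟪g x, d⟫ - L / 2 * s ^ 2 * ‖d‖ ^ 2
  have hψ : ∀ t ∈ Set.Icc (0 : ℝ) 1,
      HasDerivAt ψ (⟪g (x + t • d), d⟫ - ⟪g x, d⟫ - L * t * ‖d‖ ^ 2) t := fun t ht => by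
    have hquad := ((hasDerivAt_pow 2 t).const_mul (L / 2)).mul_const (‖d‖ ^ 2)
    refine ((((hg _ (hseg t ht)).hasDerivAt_comp_add_smul).sub
      ((hasDerivAt_id t).mul_const ⟪g x, d⟫)).sub hquad).congr_deriv ?_
    simp only [one_mul]; push_cast; ring
  have hanti : AntitoneOn ψ (Set.Icc 0 1) := by
    refine antitoneOn_of_hasDerivWithinAt_nonpos (convex_Icc 0 1)
      (fun t ht => (hψ t ht).continuousAt.continuousWithinAt)
      (fun t ht => (hψ t (interior_subset ht)).hasDerivWithinAt) fun t ht => ?_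
    rw [interior_Icc] at ht
    have hz : ‖g (x + t • d) - g x‖ ≤ L * (t * ‖d‖) := by
      simpa [norm_smul, abs_of_pos ht.1] using hlip _ (hseg t (Set.Ioo_subset_Icc_self ht))
    have hcs := real_inner_le_norm (g (x + t • d) - g x) d
    rw [inner_sub_left] at hcs
    nlinarith [norm_nonneg d]
  have h01 := hanti (Set.left_mem_Icc.2 zero_le_one) (Set.right_mem_Icc.2 zero_le_one)
    zero_le_one
  simp only [ψ, d, one_smul, zero_smul, add_zero, add_sub_cancel] at h01
  linarith

lemma real_inner_sub_le_zero_of_forall_norm_sub_le {K : Set E} (hK : Convex ℝ K) {u v : E}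
    (hv : v ∈ K) (hmin : ∀ w ∈ K, ‖v - u‖ ≤ ‖w - u‖) : ∀ w ∈ K, ⟪u - v, w - v⟫ ≤ 0 := by
  have : Nonempty K := ⟨⟨v, hv⟩⟩
  refine (norm_eq_iInf_iff_real_inner_le_zero hK hv).1 (le_antisymm ?_ ?_)
  · exact le_ciInf fun w => by simpa only [norm_sub_rev u] using hmin w w.2
  · have hbdd : BddBelow (Set.range fun w : K => ‖u - w‖) :=
      ⟨0, Set.forall_mem_range.2 fun _ => norm_nonneg _⟩
    exact ciInf_le hbdd ⟨v, hv⟩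

lemma sq_norm_sub_smul_add_smul_le (a b : E) {h : ℝ} (h0 : 0 ≤ h) (h1 : h ≤ 1) :
    ‖(1 - h) • a + h • b‖ ^ 2 ≤ (1 - h) * ‖a‖ ^ 2 + h * ‖b‖ ^ 2 := by
  have hnorm := ((convexOn_norm convex_univ).pow (fun _ _ => norm_nonneg _) 2).2
    (Set.mem_univ a) (Set.mem_univ b) (sub_nonneg.2 h1) h0 (sub_add_cancel 1 h)
  simpa [smul_eq_mul] using hnorm

/-- `hproj` is the variational inequality saying that `xhat` is the projection of the gradient
step `x - (1 / γ) • v` onto a convex set containing `z`. -/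
lemma mul_sq_norm_sub_le_of_projected_gradient_step {f : E → ℝ} {v x xhat z : E} {μ γ : ℝ}
    (hγ : 0 < γ) (hproj : ⟪x - (1 / γ) • v - xhat, z - xhat⟫ ≤ 0)
    (hsc : f x + ⟪v, z - x⟫ + μ / 2 * ‖z - x‖ ^ 2 ≤ f z)
    (hdesc : f xhat ≤ f x + ⟪v, xhat - x⟫ + γ / 2 * ‖xhat - x‖ ^ 2) (hopt : f z ≤ f xhat) :
    γ * ‖xhat - z‖ ^ 2 ≤ (γ - μ) * ‖x - z‖ ^ 2 := by
  have hvi : γ * ⟪x - xhat, z - xhat⟫ ≤ ⟪v, z - xhat⟫ := by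
    have := mul_nonpos_of_nonneg_of_nonpos hγ.le hproj
    rw [sub_right_comm, inner_sub_left, real_inner_smul_left, mul_sub, ← mul_assoc,
      mul_one_div_cancel hγ.ne', one_mul] at this
    linarith
  have hpolar := norm_sub_sq_real (x - xhat) (z - xhat)
  have hsplit : ⟪v, xhat - x⟫ = ⟪v, z - x⟫ - ⟪v, z - xhat⟫ := by
    rw [← inner_sub_right, sub_sub_sub_cancel_left]
  rw [sub_sub_sub_cancel_right] at hpolar
  rw [norm_sub_rev z x] at hsc
  rw [norm_sub_rev xhat x] at hdesc
  rw [norm_sub_rev xhat z]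
  linear_combination 2 * (hsc + hdesc + hopt + hvi) + 2 * hsplit - γ * hpolar

end

theorem stmt_2_general {n : ℕ} (X : Set (EuclideanSpace ℝ (Fin n)))
    (hXcv : Convex ℝ X)
    (f : EuclideanSpace ℝ (Fin n) → ℝ)
    (g : EuclideanSpace ℝ (Fin n) → EuclideanSpace ℝ (Fin n))
    (hg : ∀ x, HasGradientAt f (g x) x)
    (μ L γ h : ℝ) (hμ : 0 < μ) (hμL : μ ≤ L) (hLγ : L ≤ γ)
    (hh0 : 0 < h) (hh1 : h ≤ 1)
    (hsc : ∀ x ∈ X, ∀ y ∈ X, f y ≥ f x + ⟪g x, y - x⟫ + (μ/2) * ‖y - x‖^2)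
    (hlip : ∀ x ∈ X, ∀ y ∈ X, ‖g x - g y‖ ≤ L * ‖x - y‖)
    (xstar : EuclideanSpace ℝ (Fin n)) (hxstar : xstar ∈ X)
    (hmin : ∀ z ∈ X, f xstar ≤ f z)
    (x : EuclideanSpace ℝ (Fin n)) (hx : x ∈ X)
    (xhat : EuclideanSpace ℝ (Fin n)) (hhat : xhat ∈ X)
    (hproj : ∀ z ∈ X, ‖xhat - (x - (1/γ) • g x)‖ ≤ ‖z - (x - (1/γ) • g x)‖)
    (xplus : EuclideanSpace ℝ (Fin n)) (hplus : xplus = x + h • (xhat - x)) :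
    ‖xplus - xstar‖ ≤ Real.sqrt (1 - h * μ / γ) * ‖x - xstar‖
    ∧ 0 ≤ Real.sqrt (1 - h * μ / γ) ∧ Real.sqrt (1 - h * μ / γ) < 1 := by
  have hγ : 0 < γ := hμ.trans_le (hμL.trans hLγ)
  have hdesc := hXcv.le_add_inner_add_sq_of_lipschitz_gradient (L := γ) (fun z _ => hg z) hx hhat
    fun z hz => (hlip z hz x hx).trans (by gcongr)
  have hstep := mul_sq_norm_sub_le_of_projected_gradient_step hγ
    (real_inner_sub_le_zero_of_forall_norm_sub_le hXcv hhat hproj xstar hxstar)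
    (hsc x hx xstar hxstar) hdesc (hmin xhat hhat)
  have hcomb : xplus - xstar = (1 - h) • (x - xstar) + h • (xhat - xstar) := by
    rw [hplus]; module
  have hsq : ‖xplus - xstar‖ ^ 2 ≤ (1 - h * μ / γ) * ‖x - xstar‖ ^ 2 := by
    rw [hcomb]
    have hγstep : ‖xhat - xstar‖ ^ 2 ≤ (1 - μ / γ) * ‖x - xstar‖ ^ 2 := by
      rw [one_sub_div hγ.ne', div_mul_eq_mul_div, le_div_iff₀ hγ]
      linarith
    calc _ ≤ (1 - h) * ‖x - xstar‖ ^ 2 + h * ‖xhat - xstar‖ ^ 2 :=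
          sq_norm_sub_smul_add_smul_le _ _ hh0.le hh1
      _ ≤ (1 - h) * ‖x - xstar‖ ^ 2 + h * ((1 - μ / γ) * ‖x - xstar‖ ^ 2) := by gcongr
      _ = (1 - h * μ / γ) * ‖x - xstar‖ ^ 2 := by ring
  refine ⟨?_, Real.sqrt_nonneg _, (Real.sqrt_lt' one_pos).2 ?_⟩
  · rw [← Real.sqrt_sq (norm_nonneg (xplus - xstar)), ← Real.sqrt_sq (norm_nonneg (x - xstar)),
      ← Real.sqrt_mul' _ (sq_nonneg _)]
    exact Real.sqrt_le_sqrt hsq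
  · have : 0 < h * μ / γ := by positivity
    linarith

theorem stmt_2 {n : ℕ} (X : Set (EuclideanSpace ℝ (Fin n)))
    (hXne : X.Nonempty) (hXcl : IsClosed X) (hXcv : Convex ℝ X)
    (f : EuclideanSpace ℝ (Fin n) → ℝ)
    (g : EuclideanSpace ℝ (Fin n) → EuclideanSpace ℝ (Fin n))
    (hg : ∀ x, HasGradientAt f (g x) x)
    (μ L γ h : ℝ) (hμ : 0 < μ) (hμL : μ ≤ L) (hLγ : L ≤ γ)
    (hh0 : 0 < h) (hh1 : h ≤ 1)
    (hsc : ∀ x ∈ X, ∀ y ∈ X, f y ≥ f x + ⟪g x, y - x⟫ + (μ/2) * ‖y - x‖^2)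
    (hlip : ∀ x ∈ X, ∀ y ∈ X, ‖g x - g y‖ ≤ L * ‖x - y‖)
    (xstar : EuclideanSpace ℝ (Fin n)) (hxstar : xstar ∈ X)
    (hmin : ∀ z ∈ X, f xstar ≤ f z)
    (x : EuclideanSpace ℝ (Fin n)) (hx : x ∈ X)
    (xhat : EuclideanSpace ℝ (Fin n)) (hhat : xhat ∈ X)
    (hproj : ∀ z ∈ X, ‖xhat - (x - (1/γ) • g x)‖ ≤ ‖z - (x - (1/γ) • g x)‖)
    (xplus : EuclideanSpace ℝ (Fin n)) (hplus : xplus = x + h • (xhat - x)) :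
    ‖xplus - xstar‖ ≤ Real.sqrt (1 - h * μ / γ) * ‖x - xstar‖
    ∧ 0 ≤ Real.sqrt (1 - h * μ / γ) ∧ Real.sqrt (1 - h * μ / γ) < 1 :=
  stmt_2_general X hXcv f g hg μ L γ h hμ hμL hLγ hh0 hh1 hsc hlip xstar hxstar hmin x hx xhat hhat
    hproj xplus hplus
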